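/- arXiv:1009.5756 — 2 statements merged into one kernel-verified Lean document; each statement's English description precedes it below -/
import Mathlib

section
/- Let κ > 0, C₁ > 0, C₂ > 0 and 1 < α < 2 be real numbers. Then there exist constants C₃ ≥ 0 and C₄ ≥ 0, depending only on κ, α, C₁ and C₂, with the following property: for all real numbers t > 0, a ≥ 0 and b such that κ·t·(a − b)² − (a − α·b) ≤ C₁·t·a + C₂·t, one has a − α·b ≤ C₃ + C₄/t. -/
/-!
Put `F = a - α b`; only `F > 0` needs an argument. Since `α (a - b) = (α - 1) a + F` with both
summands nonnegative, the hypothesis gives `(κ / α²) t (F² + (α - 1)² a²) ≤ F + C₁ t a + C₂ t`.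
The term in `a²` absorbs `C₁ t a` after completing the square, leaving a quadratic inequality
`c t F² ≤ F + K t`, which forces `F ≤ √(K / c) + c⁻¹ / t`.
-/

theorem mul_le_mul_sq_add_sq_div {p : ℝ} (hp : 0 < p) (C a : ℝ) :
    C * a ≤ p * a ^ 2 + C ^ 2 / (4 * p) := by
  have hsq : 0 ≤ p * (a - C / (2 * p)) ^ 2 := by positivity
  have hexpand : p * (a - C / (2 * p)) ^ 2 = p * a ^ 2 + C ^ 2 / (4 * p) - C * a := by
    field_simp
    ring
  linarith

theorem le_sqrt_div_add_inv_div_of_mul_sq_le {c K t x : ℝ} (hc : 0 < c) (ht : 0 < t)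
    (h : c * t * x ^ 2 ≤ x + K * t) : x ≤ √(K / c) + c⁻¹ / t := by
  set s := √(K / c)
  by_contra! hx
  have hs : 0 ≤ s := Real.sqrt_nonneg _
  have hK : K ≤ c * s ^ 2 := by
    rw [Real.sq_sqrt', ← div_le_iff₀' hc]
    exact le_max_left _ _
  have hx_pos : 0 < x := lt_of_le_of_lt (by positivity) hx
  have hctx : c * t * s + 1 < c * t * x := by
    have := mul_lt_mul_of_pos_left hx (mul_pos hc ht)
    rwa [mul_add, show c * t * (c⁻¹ / t) = 1 by field_simp] at this
  have hsx : c * t * s * s ≤ c * t * s * x := by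
    gcongr
    exact (le_add_of_nonneg_right (by positivity)).trans hx.le
  nlinarith [mul_lt_mul_of_pos_left hctx hx_pos]

theorem sq_add_sq_le_sq_mul_sub {α a b : ℝ} (hα : 1 < α) (ha : 0 ≤ a) (hF : 0 ≤ a - α * b) :
    (a - α * b) ^ 2 + (α - 1) ^ 2 * a ^ 2 ≤ α ^ 2 * (a - b) ^ 2 := by
  have hsplit : α * (a - b) = (α - 1) * a + (a - α * b) := by ring
  have hcross : 0 ≤ (α - 1) * a * (a - α * b) := by
    have : 0 ≤ α - 1 := by linarith
    positivity
  nlinarith [hsplit]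

theorem div_sq_mul_sq_le_of_li_yau {κ C₁ C₂ α t a b : ℝ} (hκ : 0 < κ) (hα : 1 < α)
    (ht : 0 < t) (ha : 0 ≤ a) (hF : 0 ≤ a - α * b)
    (h : κ * t * (a - b) ^ 2 - (a - α * b) ≤ C₁ * t * a + C₂ * t) :
    κ / α ^ 2 * t * (a - α * b) ^ 2 ≤
      (a - α * b) + (C₂ + C₁ ^ 2 / (4 * (κ / α ^ 2 * (α - 1) ^ 2))) * t := by
  have hα0 : 0 < α ^ 2 := by positivity
  have hp : 0 < κ / α ^ 2 * (α - 1) ^ 2 := by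
    have : 0 < α - 1 := by linarith
    positivity
  have hsq : κ / α ^ 2 * t * ((a - α * b) ^ 2 + (α - 1) ^ 2 * a ^ 2) ≤ κ * t * (a - b) ^ 2 := by
    calc κ / α ^ 2 * t * ((a - α * b) ^ 2 + (α - 1) ^ 2 * a ^ 2)
        ≤ κ / α ^ 2 * t * (α ^ 2 * (a - b) ^ 2) := by
          gcongr
          exact sq_add_sq_le_sq_mul_sub hα ha hF
      _ = κ * t * (a - b) ^ 2 := by field_simp
  have hsquare := mul_le_mul_of_nonneg_left (mul_le_mul_sq_add_sq_div hp C₁ a) ht.le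
  nlinarith

theorem stmt_8_general (κ C₁ C₂ α : ℝ) (hκ : 0 < κ) (hα₁ : 1 < α) :
    ∃ C₃ C₄ : ℝ, 0 ≤ C₃ ∧ 0 ≤ C₄ ∧
      ∀ t a b : ℝ, 0 < t → 0 ≤ a →
        κ * t * (a - b) ^ 2 - (a - α * b) ≤ C₁ * t * a + C₂ * t →
        a - α * b ≤ C₃ + C₄ / t := by
  set c := κ / α ^ 2
  have hc : 0 < c := by positivity
  refine ⟨√((C₂ + C₁ ^ 2 / (4 * (c * (α - 1) ^ 2))) / c), c⁻¹, Real.sqrt_nonneg _,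
    inv_nonneg.mpr hc.le, fun t a b ht ha h => ?_⟩
  rcases le_or_gt (a - α * b) 0 with hF | hF
  · exact hF.trans (by positivity)
  · exact le_sqrt_div_add_inv_div_of_mul_sq_le hc ht
      (div_sq_mul_sq_le_of_li_yau hκ hα₁ ht ha hF.le h)

/-- Real-variable core of the Li–Yau gradient estimate: there are constants `C₃, C₄ ≥ 0`
depending only on `κ, α, C₁, C₂` such that whenever `t > 0`, `a ≥ 0` and
`κ t (a − b)² − (a − α b) ≤ C₁ t a + C₂ t`, one has `a − α b ≤ C₃ + C₄ / t`. -/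
theorem stmt_8 (κ C₁ C₂ α : ℝ) (hκ : 0 < κ) (hC₁ : 0 < C₁) (hC₂ : 0 < C₂)
    (hα₁ : 1 < α) (hα₂ : α < 2) :
    ∃ C₃ C₄ : ℝ, 0 ≤ C₃ ∧ 0 ≤ C₄ ∧
      ∀ t a b : ℝ, 0 < t → 0 ≤ a →
        κ * t * (a - b) ^ 2 - (a - α * b) ≤ C₁ * t * a + C₂ * t →
        a - α * b ≤ C₃ + C₄ / t :=
  stmt_8_general κ C₁ C₂ α hκ hα₁
end

section
/- Let d ≥ 1, let u : ℝ^d × (0,∞) → ℝ be a positive function such that f(x,t) = log u(x,t) is differentiable in (x,t), and let α > 0, C₁ ≥ 0, C₂ ≥ 0 be constants such that for all x ∈ ℝ^d and t > 0 one has ‖∇_x f(x,t)‖² − α·∂_t f(x,t) ≤ C₁ + C₂/t. Then for all x, y ∈ ℝ^d and all 0 < t₁ < t₂: log u(x,t₁) − log u(y,t₂) ≤ α‖x−y‖²/(4(t₂−t₁)) + (C₁/α)(t₂−t₁) + (C₂/α)·log(t₂/t₁). -/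
/-!
Join `(x, t₁)` to `(y, t₂)` by the segment `t ↦ (γ t, t)` travelled at constant speed
`w = (y - x) / (t₂ - t₁)`. Along it, `d/dt f(γ t, t) = ⟪∇f, w⟫ + ∂ₜf`, and the Li–Yau bound
`∂ₜf ≥ (‖∇f‖² - C₁ - C₂/t)/α` together with Young's inequality `-⟪∇f, w⟫ ≤ ‖∇f‖²/α + α‖w‖²/4`
gives `-d/dt f(γ t, t) ≤ α‖w‖²/4 + C₁/α + C₂/(α t)`. Integrating from `t₁` to `t₂`, which we do
by comparing with the explicit antiderivative `(α‖w‖²/4 + C₁/α) t + (C₂/α) log t`, yields the Harnack inequality.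
-/

open RealInnerProductSpace Set

theorem sub_le_sub_of_hasDerivAt_le {g g' h h' : ℝ → ℝ} {a b : ℝ} (hab : a ≤ b)
    (hg : ∀ t ∈ Icc a b, HasDerivAt g (g' t) t) (hh : ∀ t ∈ Icc a b, HasDerivAt h (h' t) t)
    (hle : ∀ t ∈ Icc a b, g' t ≤ h' t) : g b - g a ≤ h b - h a := by
  have hderiv : ∀ t ∈ Icc a b, HasDerivAt (h - g) (h' t - g' t) t :=
    fun t ht => (hh t ht).sub (hg t ht)
  have hmono : MonotoneOn (h - g) (Icc a b) := by
    refine monotoneOn_of_hasDerivWithinAt_nonneg (convex_Icc a b)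
      (fun t ht => (hderiv t ht).continuousAt.continuousWithinAt)
      (fun t ht => (hderiv t (interior_subset ht)).hasDerivWithinAt)
      (fun t ht => sub_nonneg.2 (hle t (interior_subset ht)))
  have := hmono (left_mem_Icc.2 hab) (right_mem_Icc.2 hab) hab
  simp only [Pi.sub_apply] at this
  linarith

section InnerProductSpace

variable {E : Type*} [NormedAddCommGroup E] [InnerProductSpace ℝ E]

theorem real_inner_sub_norm_sq_div_le (G v : E) {a : ℝ} (ha : 0 < a) :
    ⟪G, v⟫ - ‖G‖ ^ 2 / a ≤ a * ‖v‖ ^ 2 / 4 := by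
  have hyoung : ‖G‖ * ‖v‖ ≤ ‖G‖ ^ 2 / a + a * ‖v‖ ^ 2 / 4 := by
    rw [div_add_div _ _ ha.ne' four_ne_zero, le_div_iff₀ (by positivity)]
    nlinarith [sq_nonneg (2 * ‖G‖ - a * ‖v‖)]
  linarith [real_inner_le_norm G v]

variable [CompleteSpace E]

theorem fderiv_prod_apply_eq_inner_gradient_add_mul_deriv {F : E × ℝ → ℝ} {x : E} {t : ℝ}
    (hF : DifferentiableAt ℝ F (x, t)) (v : E) (c : ℝ) :
    fderiv ℝ F (x, t) (v, c) =
      ⟪gradient (fun y => F (y, t)) x, v⟫ + c * deriv (fun s => F (x, s)) t := by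
  have hx : HasFDerivAt (fun y => F (y, t)) ((fderiv ℝ F (x, t)).comp (.inl ℝ E ℝ)) x :=
    hF.hasFDerivAt.comp x (hasFDerivAt_prodMk_left x t)
  have ht : HasDerivAt (fun s => F (x, s)) (fderiv ℝ F (x, t) (0, 1)) t :=
    hF.hasFDerivAt.comp_hasDerivAt t ((hasDerivAt_const t x).prodMk (hasDerivAt_id t))
  have hsplit : ((v, c) : E × ℝ) = (v, 0) + c • (0, 1) := by simp
  rw [gradient, hx.fderiv, ht.deriv, InnerProductSpace.toDual_symm_apply, hsplit, map_add,
    map_smul, smul_eq_mul]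
  rfl

theorem neg_le_fderiv_prod_apply_of_liYau {F : E × ℝ → ℝ} {z : E} {t α B : ℝ}
    (hF : DifferentiableAt ℝ F (z, t)) (hα : 0 < α)
    (hLiYau : ‖gradient (fun y => F (y, t)) z‖ ^ 2 - α * deriv (fun s => F (z, s)) t ≤ B)
    (w : E) : -(α * ‖w‖ ^ 2 / 4 + B / α) ≤ fderiv ℝ F (z, t) (w, 1) := by
  set G := gradient (fun y => F (y, t)) z
  set D := deriv (fun s => F (z, s)) t
  have hD : ‖G‖ ^ 2 / α - B / α ≤ D := by
    rw [← sub_div, div_le_iff₀ hα]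
    linarith
  have hyoung := real_inner_sub_norm_sq_div_le G (-w) hα
  rw [inner_neg_right, norm_neg] at hyoung
  rw [fderiv_prod_apply_eq_inner_gradient_add_mul_deriv hF, one_mul]
  linarith

theorem harnack_of_liYau {F : E × ℝ → ℝ} {α C₁ C₂ : ℝ} (hα : 0 < α)
    (hF : ∀ x t, 0 < t → DifferentiableAt ℝ F (x, t))
    (hLiYau : ∀ x t, 0 < t →
      ‖gradient (fun y => F (y, t)) x‖ ^ 2 - α * deriv (fun s => F (x, s)) t ≤ C₁ + C₂ / t)
    (x y : E) {t₁ t₂ : ℝ} (ht₁ : 0 < t₁) (ht : t₁ < t₂) :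
    F (x, t₁) - F (y, t₂) ≤
      α * ‖x - y‖ ^ 2 / (4 * (t₂ - t₁)) + C₁ / α * (t₂ - t₁) + C₂ / α * Real.log (t₂ / t₁) := by
  set Δ := t₂ - t₁
  have hΔ : 0 < Δ := sub_pos.2 ht
  set w : E := Δ⁻¹ • (y - x)
  set K := α * ‖w‖ ^ 2 / 4 + C₁ / α
  set γ : ℝ → E := fun t => x + (t - t₁) • w
  have hγ : ∀ t, HasDerivAt γ w t := fun t =>
    ((((hasDerivAt_id t).sub_const t₁).smul_const w).const_add x).congr_deriv (one_smul ℝ w)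
  have hpath : ∀ t ∈ Icc t₁ t₂,
      HasDerivAt (fun t => F (γ t, t)) (fderiv ℝ F (γ t, t) (w, 1)) t := fun t ht' =>
    (hF (γ t) t (ht₁.trans_le ht'.1)).hasFDerivAt.comp_hasDerivAt (f := fun t => (γ t, t)) t
      ((hγ t).prodMk (hasDerivAt_id t))
  have hbarrier : ∀ t ∈ Icc t₁ t₂, HasDerivAt (fun t => -(K * t + C₂ / α * Real.log t))
      (-(K + C₂ / α * t⁻¹)) t := fun t ht' =>
    (((hasDerivAt_id t).const_mul K).add
      ((Real.hasDerivAt_log (ht₁.trans_le ht'.1).ne').const_mul (C₂ / α))).neg.congr_deriv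
      (by simp)
  have hcompare := sub_le_sub_of_hasDerivAt_le ht.le hbarrier hpath fun t ht' => by
    have hpoint := neg_le_fderiv_prod_apply_of_liYau (hF _ t (ht₁.trans_le ht'.1)) hα
      (hLiYau (γ t) t (ht₁.trans_le ht'.1)) w
    convert hpoint using 2
    simp only [K]
    ring
  have hγ₁ : γ t₁ = x := by simp [γ]
  have hγ₂ : γ t₂ = y := by simp [γ, w, Δ, hΔ.ne']
  have hKΔ : K * Δ = α * ‖x - y‖ ^ 2 / (4 * Δ) + C₁ / α * Δ := by
    simp only [K, w, norm_smul, norm_inv, Real.norm_eq_abs, abs_of_pos hΔ, norm_sub_rev y x]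
    field_simp
  rw [Real.log_div (ht₁.trans ht).ne' ht₁.ne', ← hKΔ]
  simp only [hγ₁, hγ₂] at hcompare
  linarith

end InnerProductSpace

theorem stmt_9_general (d : ℕ) (u : EuclideanSpace ℝ (Fin d) → ℝ → ℝ)
    (hdiff : ∀ x t, 0 < t →
      DifferentiableAt ℝ
        (fun p : EuclideanSpace ℝ (Fin d) × ℝ => Real.log (u p.1 p.2)) (x, t))
    (α C₁ C₂ : ℝ) (hα : 0 < α)
    (hLiYau : ∀ x t, 0 < t →
      ‖gradient (fun y => Real.log (u y t)) x‖ ^ 2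
          - α * deriv (fun s => Real.log (u x s)) t ≤ C₁ + C₂ / t) :
    ∀ x y : EuclideanSpace ℝ (Fin d), ∀ t₁ t₂ : ℝ, 0 < t₁ → t₁ < t₂ →
      Real.log (u x t₁) - Real.log (u y t₂) ≤
        α * ‖x - y‖ ^ 2 / (4 * (t₂ - t₁)) + (C₁ / α) * (t₂ - t₁)
          + (C₂ / α) * Real.log (t₂ / t₁) := by
  intro x y t₁ t₂ ht₁ ht
  exact harnack_of_liYau hα hdiff hLiYau x y ht₁ ht

/-- Euclidean form of the Li–Yau path-integration argument: if `u > 0`,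
`f = log u` is differentiable in `(x,t)` for `t > 0`, and
`‖∇ₓf‖² − α ∂ₜf ≤ C₁ + C₂/t`, then for `0 < t₁ < t₂`,
`log u(x,t₁) − log u(y,t₂) ≤ α‖x−y‖²/(4(t₂−t₁)) + (C₁/α)(t₂−t₁) + (C₂/α) log(t₂/t₁)`. -/
theorem stmt_9 (d : ℕ) (hd : 1 ≤ d) (u : EuclideanSpace ℝ (Fin d) → ℝ → ℝ)
    (hu : ∀ x t, 0 < t → 0 < u x t)
    (hdiff : ∀ x t, 0 < t →
      DifferentiableAt ℝ
        (fun p : EuclideanSpace ℝ (Fin d) × ℝ => Real.log (u p.1 p.2)) (x, t))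
    (α C₁ C₂ : ℝ) (hα : 0 < α) (hC₁ : 0 ≤ C₁) (hC₂ : 0 ≤ C₂)
    (hLiYau : ∀ x t, 0 < t →
      ‖gradient (fun y => Real.log (u y t)) x‖ ^ 2
          - α * deriv (fun s => Real.log (u x s)) t ≤ C₁ + C₂ / t) :
    ∀ x y : EuclideanSpace ℝ (Fin d), ∀ t₁ t₂ : ℝ, 0 < t₁ → t₁ < t₂ →
      Real.log (u x t₁) - Real.log (u y t₂) ≤
        α * ‖x - y‖ ^ 2 / (4 * (t₂ - t₁)) + (C₁ / α) * (t₂ - t₁)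
          + (C₂ / α) * Real.log (t₂ / t₁) :=
  stmt_9_general d u hdiff α C₁ C₂ hα hLiYau
end
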